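/- Let G be a K_{r+1}-free graph with m edges. Then ρ(G) ≤ √(2m(1 - 1/r)). -/

import Mathlib

/-!
Motzkin–Straus: if `G` is `K_{r+1}`-free and `y ≥ 0`, then `yᵀ A y ≤ (1 - 1/r) (∑ yᵢ)²`.
If the support of `y` is not a clique, pick nonadjacent `i, j` in it with `(A y)ᵢ ≤ (A y)ⱼ`;
moving the weight of `i` onto `j` keeps `∑ yᵢ`, does not decrease `yᵀ A y` and shrinks the
support. On a clique support of size `s ≤ r`, `yᵀ A y = (∑ yᵢ)² - ∑ yᵢ²` and Cauchy–Schwarz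
gives `∑ yᵢ² ≥ (∑ yᵢ)² / s`.

Nikiforov's bound: by Cauchy–Schwarz over the `2m` ordered pairs of adjacent vertices,
`(xᵀ A x)² ≤ 2m · ∑_{i ~ j} xᵢ² xⱼ²`, and Motzkin–Straus applied to `y = x²` bounds the last
sum by `(1 - 1/r) (xᵀ x)²`.
-/

open Matrix

/-- The real adjacency matrix of a simple graph. -/
noncomputable def adjMat {V : Type*} [Fintype V] (G : SimpleGraph V) : Matrix V V ℝ :=
  Matrix.of fun i j =>
    haveI := Classical.propDecidable (G.Adj i j)
    if G.Adj i j then (1 : ℝ) else 0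

/-- The adjacency spectral radius of a finite simple graph, as the supremum of
the Rayleigh quotient of its (symmetric) adjacency matrix. -/
noncomputable def specRad {V : Type*} [Fintype V] (G : SimpleGraph V) : ℝ :=
  ⨆ x : {x : V → ℝ // x ≠ 0}, (x.1 ⬝ᵥ (adjMat G *ᵥ x.1)) / (x.1 ⬝ᵥ x.1)

open Finset

namespace SimpleGraph

theorem CliqueFree.card_le_of_isClique {V : Type*} {G : SimpleGraph V} {r : ℕ}
    (hG : G.CliqueFree (r + 1)) {s : Finset V} (hs : G.IsClique (s : Set V)) : #s ≤ r := by
  by_contra! h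
  obtain ⟨t, hts, ht⟩ := exists_subset_card_eq h
  exact hG t ⟨hs.subset (mod_cast hts), ht⟩

variable {V : Type*} [Fintype V] {G : SimpleGraph V} [DecidableRel G.Adj]

theorem sum_sum_adj_eq_two_mul_card_edgeFinset {R : Type*} [CommSemiring R] :
    ∑ i, ∑ j, (if G.Adj i j then 1 else 0 : R) = 2 * #G.edgeFinset := by
  have := G.natCast_card_dart_eq_dotProduct (α := R)
  rw [dart_card_eq_twice_card_edges, dotProduct_comm, dotProduct_mulVec_adjMatrix] at this
  simpa using this.symm

section CommRing

variable {R : Type*} [CommRing R]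

theorem dotProduct_adjMatrix_mulVec_add_shift [DecidableEq V] {i j : V} (hadj : ¬G.Adj i j)
    (y : V → R) (t : R) :
    (y + t • (Pi.single j 1 - Pi.single i 1)) ⬝ᵥ
        G.adjMatrix R *ᵥ (y + t • (Pi.single j 1 - Pi.single i 1)) =
      y ⬝ᵥ G.adjMatrix R *ᵥ y + 2 * t * ((G.adjMatrix R *ᵥ y) j - (G.adjMatrix R *ᵥ y) i) := by
  have hsymm (u v : V → R) : u ⬝ᵥ G.adjMatrix R *ᵥ v = v ⬝ᵥ G.adjMatrix R *ᵥ u := by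
    rw [dotProduct_mulVec, ← mulVec_transpose, transpose_adjMatrix, dotProduct_comm]
  simp only [mulVec_add, dotProduct_add, add_dotProduct, hsymm y]
  simp [mulVec_sub, mulVec_smul, dotProduct_sub, sub_dotProduct, adjMatrix_apply, hadj,
    show ¬G.Adj j i from fun h => hadj h.symm]
  ring

end CommRing

section OrderedField

variable {𝕜 : Type*} [Field 𝕜] [LinearOrder 𝕜] [IsStrictOrderedRing 𝕜]

variable (G) in
theorem dotProduct_adjMatrix_mulVec_le_sq_sum_sub_sum_sq {y : V → 𝕜} (hy : 0 ≤ y) :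
    y ⬝ᵥ G.adjMatrix 𝕜 *ᵥ y ≤ (∑ i, y i) ^ 2 - ∑ i, y i ^ 2 := by
  classical
  have hdiag : ∑ i, y i ^ 2 = ∑ i, ∑ j, if i = j then y i * y j else 0 := by simp [sq]
  rw [dotProduct_mulVec_adjMatrix, le_sub_iff_add_le, hdiag, sq, sum_mul_sum,
    ← sum_add_distrib]
  refine sum_le_sum fun i _ => ?_
  rw [← sum_add_distrib]
  refine sum_le_sum fun j _ => ?_
  by_cases hij : i = j
  · subst hij; simp
  · split_ifs <;> simp [mul_nonneg (hy i) (hy j)]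

theorem dotProduct_adjMatrix_mulVec_le_of_isClique_support {r : ℕ} (hG : G.CliqueFree (r + 1))
    {y : V → 𝕜} (hy : 0 ≤ y) (hclique : G.IsClique (Function.support y)) :
    y ⬝ᵥ G.adjMatrix 𝕜 *ᵥ y ≤ (1 - 1 / r) * (∑ i, y i) ^ 2 := by
  classical
  set S := univ.filter (y · ≠ 0)
  have hS : (S : Set V) = Function.support y := by ext; simp [S]
  have hcard : (#S : 𝕜) ≤ r := mod_cast hG.card_le_of_isClique (hS ▸ hclique)
  have hcs : (∑ i, y i) ^ 2 ≤ r * ∑ i, y i ^ 2 :=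
    calc (∑ i, y i) ^ 2 = (∑ i ∈ S, y i) ^ 2 := by rw [sum_filter_ne_zero]
      _ ≤ #S * ∑ i ∈ S, y i ^ 2 := sq_sum_le_card_mul_sum_sq
      _ ≤ r * ∑ i, y i ^ 2 := by
        gcongr
        exact subset_univ S
  have hdiv : (∑ i, y i) ^ 2 / r ≤ ∑ i, y i ^ 2 :=
    div_le_of_le_mul₀ (by positivity) (sum_nonneg fun i _ => sq_nonneg (y i))
      (by rwa [mul_comm])
  have : (1 - 1 / (r : 𝕜)) * (∑ i, y i) ^ 2 = (∑ i, y i) ^ 2 - (∑ i, y i) ^ 2 / r := by ring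
  linarith [dotProduct_adjMatrix_mulVec_le_sq_sum_sub_sum_sq G hy]

theorem exists_shift_of_not_isClique_support {y : V → 𝕜} (hy : 0 ≤ y)
    (hy' : ¬G.IsClique (Function.support y)) :
    ∃ y' : V → 𝕜, 0 ≤ y' ∧ ∑ i, y' i = ∑ i, y i ∧ Function.support y' ⊂ Function.support y ∧
      y ⬝ᵥ G.adjMatrix 𝕜 *ᵥ y ≤ y' ⬝ᵥ G.adjMatrix 𝕜 *ᵥ y' := by
  classical
  obtain ⟨i, hi, j, hj, hij, hadj⟩ : ∃ i ∈ Function.support y, ∃ j ∈ Function.support y,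
      i ≠ j ∧ ¬G.Adj i j := by
    simpa [IsClique, Set.Pairwise] using hy'
  wlog hle : (G.adjMatrix 𝕜 *ᵥ y) i ≤ (G.adjMatrix 𝕜 *ᵥ y) j generalizing i j
  · exact this j hj i hi hij.symm (fun h => hadj h.symm) (le_of_not_ge hle)
  refine ⟨y + y i • (Pi.single j 1 - Pi.single i 1), fun k => ?_, ?_, ?_, ?_⟩
  · obtain rfl | hki := eq_or_ne k i
    · simp [hij.symm]
    obtain rfl | hkj := eq_or_ne k j
    · simpa [hki] using add_nonneg (hy k) (hy i)
    · simpa [hki, hkj] using hy k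
  · simp [sum_add_distrib, ← mul_sum, sum_sub_distrib]
  · refine (Set.ssubset_iff_of_subset fun k hk => ?_).2 ⟨i, hi, by simp [hij.symm]⟩
    by_contra hk0
    have hki : k ≠ i := by rintro rfl; exact hk0 hi
    have hkj : k ≠ j := by rintro rfl; exact hk0 hj
    simp [hki, hkj] at hk
    exact hk0 hk
  · rw [dotProduct_adjMatrix_mulVec_add_shift hadj]
    exact le_add_of_nonneg_right (mul_nonneg (mul_nonneg zero_le_two (hy i)) (sub_nonneg.2 hle))

theorem CliqueFree.dotProduct_adjMatrix_mulVec_le {r : ℕ} (hG : G.CliqueFree (r + 1))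
    {y : V → 𝕜} (hy : 0 ≤ y) :
    y ⬝ᵥ G.adjMatrix 𝕜 *ᵥ y ≤ (1 - 1 / r) * (∑ i, y i) ^ 2 := by
  induction h : Function.support y using WellFoundedLT.induction generalizing y with
  | ind s ih =>
    subst h
    by_cases hclique : G.IsClique (Function.support y)
    · exact dotProduct_adjMatrix_mulVec_le_of_isClique_support hG hy hclique
    obtain ⟨y', hy', hsum, hsupp, hle⟩ := exists_shift_of_not_isClique_support hy hclique
    exact hle.trans (hsum ▸ ih _ hsupp hy' rfl)

end OrderedField

theorem CliqueFree.dotProduct_adjMatrix_mulVec_le_sqrt {r : ℕ} (hG : G.CliqueFree (r + 1))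
    (x : V → ℝ) :
    x ⬝ᵥ G.adjMatrix ℝ *ᵥ x ≤ √(2 * #G.edgeFinset * (1 - 1 / r)) * (x ⬝ᵥ x) := by
  have hcs : (x ⬝ᵥ G.adjMatrix ℝ *ᵥ x) ^ 2 ≤
      (2 * #G.edgeFinset) * ((x ^ 2) ⬝ᵥ G.adjMatrix ℝ *ᵥ (x ^ 2)) := by
    rw [← sum_sum_adj_eq_two_mul_card_edgeFinset, dotProduct_mulVec_adjMatrix,
      dotProduct_mulVec_adjMatrix]
    simp only [← Fintype.sum_prod_type', Pi.pow_apply]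
    refine sum_sq_le_sum_mul_sum_of_sq_le_mul _ (fun _ _ => by split_ifs <;> positivity)
      (fun _ _ => by split_ifs <;> positivity) fun p _ => ?_
    split_ifs <;> simp [mul_pow]
  have hms := hG.dotProduct_adjMatrix_mulVec_le (y := x ^ 2) (fun i => sq_nonneg (x i))
  have hxx : ∑ i, (x ^ 2) i = x ⬝ᵥ x := by simp [dotProduct, sq]
  rw [hxx] at hms
  calc x ⬝ᵥ G.adjMatrix ℝ *ᵥ x ≤ √(2 * #G.edgeFinset * (1 - 1 / r) * (x ⬝ᵥ x) ^ 2) := by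
        refine (le_abs_self _).trans (Real.abs_le_sqrt ?_)
        calc _ ≤ _ := hcs
          _ ≤ 2 * #G.edgeFinset * ((1 - 1 / r) * (x ⬝ᵥ x) ^ 2) := by gcongr
          _ = _ := by ring
    _ = √(2 * #G.edgeFinset * (1 - 1 / r)) * (x ⬝ᵥ x) := by
        rw [Real.sqrt_mul' _ (sq_nonneg _),
          Real.sqrt_sq (by simpa using dotProduct_self_star_nonneg x)]

end SimpleGraph

theorem adjMat_eq_adjMatrix {V : Type*} [Fintype V] (G : SimpleGraph V) [DecidableRel G.Adj] :
    adjMat G = G.adjMatrix ℝ := by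
  ext i j
  simp [adjMat, SimpleGraph.adjMatrix_apply]

theorem stmt_10_general {V : Type*} [Fintype V] (G : SimpleGraph V) (m r : ℕ)
    (hfree : G.CliqueFree (r + 1)) (hm : G.edgeSet.ncard = m) :
    specRad G ≤ Real.sqrt (2 * m * (1 - 1 / (r : ℝ))) := by
  classical
  have hcard : #G.edgeFinset = m := by
    rw [← hm, ← SimpleGraph.coe_edgeFinset, Set.ncard_coe_finset]
  refine Real.iSup_le (fun x => ?_) (Real.sqrt_nonneg _)
  rw [adjMat_eq_adjMatrix, ← hcard]
  exact div_le_of_le_mul₀ (by simpa using dotProduct_self_star_nonneg x.1) (Real.sqrt_nonneg _)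
    (hfree.dotProduct_adjMatrix_mulVec_le_sqrt x.1)

/-- Nikiforov's spectral Turán bound: a `K_{r+1}`-free graph with `m` edges has
spectral radius at most `√(2m(1 - 1/r))`. -/
theorem stmt_10 {V : Type*} [Fintype V] (G : SimpleGraph V) (m r : ℕ) (hr : 1 ≤ r)
    (hfree : G.CliqueFree (r + 1)) (hm : G.edgeSet.ncard = m) :
    specRad G ≤ Real.sqrt (2 * m * (1 - 1 / (r : ℝ))) :=
  stmt_10_general G m r hfree hm
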